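/- Let G be a simple, simply-connected complex algebraic group for which Kostant's conjecture holds (i.e., for λ ∈ P⁺, V(λ) ⊂ V(ρ)⊗V(ρ) if and only if λ ≤ 2ρ); in particular this is the case for G = SL_n(ℂ) and for G of exceptional type. Then for any dominant integral weight λ ∈ P⁺, V(λ) occurs as an irreducible subrepresentation of H•(G/B, ∧•𝒯_{G/B}) ≅ HH•(G/B) if and only if λ ≤ 2ρ in the dominance order, and in that case it occurs with multiplicity at least m_λ > 0, where m_λ is the multiplicity of V(λ) in V(ρ) ⊗ V(ρ). -/

import Mathlib

/-!
If `V(λ)` occurs in `HH•(G/B)`, then, since `HH•(G/B)` is a quotient of `⊕_ξ H•(G/B, 𝓛(ξ))`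
over the weights `ξ = -σ_A` of `∧•𝔲` (`σ_A` a sum of distinct positive roots), `e^λ` has a
nonzero coefficient in some `H•(G/B, 𝓛(ξ))`. By Borel–Weil–Bott that module is `0` or `V(ν)`
with `ν = -w₀(w · σ_A)`, so `λ ≤ ν`, and `ν ≤ 2ρ` because the weights `ρ - σ_B` of `V(ρ)` are
permuted by `W` and all lie above `-ρ`. Conversely `V(ρ) ⊗ V(ρ)` embeds in `HH•(G/B)`, and by
Kostant's conjecture it contains `V(λ)`, with multiplicity `m λ > 0`, exactly when `λ ≤ 2ρ`.

The Weyl group facts used (`w₀ ρ = -ρ`, `-w₀` preserves dominance) come from the character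
axioms: `W`-invariance of `ch V(μ)` makes every `w μ` a weight of `V(μ)`, hence `≤ μ`, and the
cone `Q⁺` is pointed because the Cartan matrix has nonpositive off-diagonal entries while `2ρ`
has positive coordinates.
-/

open scoped BigOperators

namespace KostantHH

/-- The integral weight lattice of a rank-`ℓ` simple, simply-connected group /
simple Lie algebra, written in fundamental-weight coordinates (so the
fundamental weights `ϖᵢ` are the standard basis vectors, and pairing a weight
with the `i`-th simple coroot is taking its `i`-th coordinate). -/
abbrev P (ℓ : ℕ) := Fin ℓ → ℤ

/-- The group algebra `ℤ[P]` of the weight lattice. -/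
abbrev R (ℓ : ℕ) := AddMonoidAlgebra ℤ (P ℓ)

/-- `e μ` is the basis element `e^μ` of `ℤ[P]`. -/
noncomputable def e {ℓ : ℕ} (μ : P ℓ) : R ℓ := AddMonoidAlgebra.single μ 1

/-- The Weyl vector `ρ = ϖ₁ + ⋯ + ϖ_ℓ`, i.e. `(1,…,1)` in fundamental-weight
coordinates. -/
def ρ {ℓ : ℕ} : P ℓ := fun _ => 1

/-- A weight is dominant iff all its fundamental-weight coordinates (= pairings
with the simple coroots) are nonnegative. -/
def dominant {ℓ : ℕ} (lam : P ℓ) : Prop := ∀ i, 0 ≤ lam i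

/-- The combinatorial root datum of a finite-dimensional simple complex Lie
algebra `𝔤` of rank `ℓ`: the simple roots `α i` (written in fundamental-weight
coordinates, so that `α i j = ⟨α i, αⱼ^∨⟩` is the Cartan matrix) and the set
`Φpos` of positive roots, whose sum is `2ρ`. -/
structure RootDatum (ℓ : ℕ) where
  α : Fin ℓ → P ℓ
  cartan_diag : ∀ i, α i i = 2
  cartan_offdiag : ∀ i j, i ≠ j → α i j ≤ 0
  Φpos : Finset (P ℓ)
  simple_mem : ∀ i, α i ∈ Φpos
  pos_in_cone : ∀ β ∈ Φpos, ∃ c : Fin ℓ → ℕ, β = ∑ i, (c i : ℤ) • α i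
  sum_pos_roots : ∑ β ∈ Φpos, β = (2 : ℤ) • ρ

/-- The dominance (Bruhat–Chevalley) order on weights: `λ ≤ μ` iff `μ - λ` is a
nonnegative integral combination of the simple roots (i.e. lies in `Q⁺`). -/
def domle {ℓ : ℕ} (S : RootDatum ℓ) (lam mu : P ℓ) : Prop :=
  ∃ c : Fin ℓ → ℕ, mu - lam = ∑ i, (c i : ℤ) • S.α i

/-- The simple reflection `sᵢ(μ) = μ - ⟨μ, αᵢ^∨⟩ αᵢ`, as an automorphism of the
weight lattice. -/
def sRefl {ℓ : ℕ} (S : RootDatum ℓ) (i : Fin ℓ) : AddAut (P ℓ) where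
  toFun μ := μ - μ i • S.α i
  invFun μ := μ - μ i • S.α i
  left_inv := by
    intro μ
    funext j
    simp only [Pi.sub_apply, Pi.smul_apply, smul_eq_mul]
    rw [S.cartan_diag i]
    ring
  right_inv := by
    intro μ
    funext j
    simp only [Pi.sub_apply, Pi.smul_apply, smul_eq_mul]
    rw [S.cartan_diag i]
    ring
  map_add' := by
    intro μ ν
    funext j
    simp only [Pi.add_apply, Pi.sub_apply, Pi.smul_apply, smul_eq_mul]
    ring

/-- The Weyl group `W`, realized as the subgroup of automorphisms of the weight
lattice generated by the simple reflections. -/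
def Wgrp {ℓ : ℕ} (S : RootDatum ℓ) : AddSubgroup (AddAut (P ℓ)) :=
  AddSubgroup.closure (Set.range (sRefl S))

/-- `w₀` is the longest element of the Weyl group: the (unique) element sending
all positive roots to negative roots. -/
def IsLongest {ℓ : ℕ} (S : RootDatum ℓ) (w₀ : AddAut (P ℓ)) : Prop :=
  w₀ ∈ Wgrp S ∧ ∀ β ∈ S.Φpos, -(w₀ β) ∈ S.Φpos

/-- The action of a Weyl group element on the group algebra `ℤ[P]`,
`w(e^μ) := e^{w μ}`. -/
noncomputable def wact {ℓ : ℕ} (w : AddAut (P ℓ)) (f : R ℓ) : R ℓ :=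
  AddMonoidAlgebra.ofCoeff (Finsupp.mapDomain (⇑w) f.coeff)

/-- The involution `◇` of `ℤ[P]`, determined by `◇(e^μ) = e^{-μ}`. -/
noncomputable def dia {ℓ : ℕ} (f : R ℓ) : R ℓ :=
  AddMonoidAlgebra.ofCoeff (Finsupp.mapDomain (fun μ : P ℓ => -μ) f.coeff)

/-- The shifted (dot) action of the Weyl group on weights:
`w · λ = w(λ + ρ) - ρ`. -/
def dot {ℓ : ℕ} (w : AddAut (P ℓ)) (lam : P ℓ) : P ℓ := w (lam + ρ) - ρ

/-- `D` is the `i`-th Demazure operator `Dᵢ(f) = (f - e^{-αᵢ}·sᵢ(f))/(1 - e^{-αᵢ})`,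
characterized by the equation `Dᵢ(f)·(1 - e^{-αᵢ}) = f - e^{-αᵢ}·sᵢ(f)`. -/
def IsDemazure {ℓ : ℕ} (S : RootDatum ℓ) (i : Fin ℓ) (D : Module.End ℤ (R ℓ)) : Prop :=
  ∀ f : R ℓ, D f * (1 - e (-(S.α i))) = f - e (-(S.α i)) * wact (sRefl S i) f

/-- `Dw0` is the Demazure operator `D_{w₀} = D_{i₁} ∘ ⋯ ∘ D_{i_k}` attached to a
reduced word `w₀ = s_{i₁} ⋯ s_{i_k}` for the longest element `w₀` (a word for
`w₀` is reduced iff its length is `#Φ⁺ = ℓ(w₀)`). -/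
def IsDw0 {ℓ : ℕ} (S : RootDatum ℓ) (w₀ : AddAut (P ℓ))
    (Dw0 : Module.End ℤ (R ℓ)) : Prop :=
  ∃ (word : List (Fin ℓ)) (D : Fin ℓ → Module.End ℤ (R ℓ)),
    (∀ i, IsDemazure S i (D i)) ∧
    (word.map (sRefl S)).sum = w₀ ∧
    word.length = S.Φpos.card ∧
    Dw0 = (word.map D).prod

/-- The characters of the finite-dimensional irreducible highest weight
`𝔤`-modules `V(λ)`: `chV λ = ch V(λ) = ∑_μ (dim V(λ)_μ) e^μ ∈ ℤ[P]` for
dominant `λ`.  The recorded axioms express that `V(λ)` is a `𝔤`-module with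
highest weight `λ` occurring with multiplicity one: weight multiplicities are
nonnegative, the coefficient of `e^λ` is `1`, all weights are `≤ λ` in
dominance order, and the character is Weyl-group invariant. -/
structure CharTheory {ℓ : ℕ} (S : RootDatum ℓ) where
  chV : P ℓ → R ℓ
  chV_coeff_nonneg : ∀ lam μ, 0 ≤ (chV lam).coeff μ
  chV_self : ∀ lam, dominant lam → (chV lam).coeff lam = 1
  chV_support_le : ∀ lam, dominant lam → ∀ μ ∈ (chV lam).coeff.support, domle S μ lam
  chV_invariant : ∀ lam, dominant lam → ∀ i, wact (sRefl S i) (chV lam) = chV lam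

/-- `g ∈ ℤ[P]` is the character of a finite-dimensional `𝔤`-module, i.e. a sum
of characters of irreducibles `V(μ)` with `μ` dominant. -/
def IsChar {ℓ : ℕ} {S : RootDatum ℓ} (T : CharTheory S) (g : R ℓ) : Prop :=
  ∃ l : List (P ℓ), (∀ μ ∈ l, dominant μ) ∧ g = (l.map T.chV).sum

/-- The irreducible `V(λ)` occurs with multiplicity at least `m` in the
(semisimple, finite-dimensional) `𝔤`-module with character `g`. -/
def OccursWithMult {ℓ : ℕ} {S : RootDatum ℓ} (T : CharTheory S) (m : ℕ)
    (lam : P ℓ) (g : R ℓ) : Prop :=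
  ∃ h : R ℓ, IsChar T h ∧ g = (m : ℤ) • T.chV lam + h

/-- The irreducible `V(λ)` occurs as a subrepresentation of the (semisimple,
finite-dimensional) `𝔤`-module with character `g`. -/
def Occurs {ℓ : ℕ} {S : RootDatum ℓ} (T : CharTheory S) (lam : P ℓ) (g : R ℓ) : Prop :=
  OccursWithMult T 1 lam g


section Development

variable {ℓ : ℕ}

/-- The positive root cone `Q⁺`. -/
def posCone (S : RootDatum ℓ) : Submodule ℕ (P ℓ) :=
  Submodule.span ℕ (Set.range S.α)

section PosCone

variable {S : RootDatum ℓ}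

lemma mem_posCone_iff {x : P ℓ} :
    x ∈ posCone S ↔ ∃ c : Fin ℓ → ℕ, x = ∑ i, (c i : ℤ) • S.α i := by
  simp only [posCone, Submodule.mem_span_range_iff_exists_fun, natCast_zsmul, eq_comm]

lemma domle_iff_sub_mem {lam mu : P ℓ} : domle S lam mu ↔ mu - lam ∈ posCone S :=
  mem_posCone_iff.symm

lemma domle_trans {a b c : P ℓ} (hab : domle S a b) (hbc : domle S b c) : domle S a c := by
  rw [domle_iff_sub_mem] at *
  simpa using add_mem hab hbc

lemma mem_posCone_of_mem_Φpos {β : P ℓ} (hβ : β ∈ S.Φpos) : β ∈ posCone S :=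
  mem_posCone_iff.2 (S.pos_in_cone β hβ)

lemma sum_mem_posCone {A : Finset (P ℓ)} (hA : A ⊆ S.Φpos) : ∑ β ∈ A, β ∈ posCone S :=
  Submodule.sum_mem _ fun _ hβ => mem_posCone_of_mem_Φpos (hA hβ)

lemma sum_sdiff_eq_two_rho_sub {A : Finset (P ℓ)} (hA : A ⊆ S.Φpos) :
    ∑ β ∈ S.Φpos \ A, β = (2 : ℤ) • ρ - ∑ β ∈ A, β := by
  rw [← S.sum_pos_roots, eq_sub_iff_add_eq, Finset.sum_sdiff hA]

end PosCone

theorem eq_zero_of_sum_smul_eq_zero {ι : Type*} [Fintype ι] (v : ι → ι → ℤ)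
    (hoff : ∀ i j, i ≠ j → v i j ≤ 0) (N : ι → ℕ) (hN : ∀ j, 0 < ∑ i, (N i : ℤ) * v i j)
    (c : ι → ℕ) (hc : ∑ i, (c i : ℤ) • v i = 0) : c = 0 := by
  by_contra hne
  obtain ⟨j₀, hj₀, hmin⟩ := Finset.exists_min_image {i | c i ≠ 0} (fun i => (N i : ℚ) / c i)
    (by simpa [Finset.filter_nonempty_iff, funext_iff] using hne)
  -- Subtract from `N` the largest multiple `t • c` keeping it nonnegative. Its `j₀`-th entry is
  -- then zero, so coordinate `j₀` of the new combination is a sum of nonpositive terms; yet it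
  -- equals coordinate `j₀` of `∑ N i • v i`, which is positive.
  set t : ℚ := N j₀ / c j₀
  have hc₀ : (c j₀ : ℚ) ≠ 0 := by simpa using hj₀
  have hcol : ∀ j, ∑ i, (c i : ℚ) * v i j = 0 := fun j => by
    exact_mod_cast by simpa [Finset.sum_apply] using congrFun hc j
  have hpos : 0 < ∑ i, ((N i : ℚ) - t * c i) * v i j₀ := by
    simp only [sub_mul, Finset.sum_sub_distrib, mul_assoc, ← Finset.mul_sum, hcol, mul_zero,
      sub_zero]
    exact_mod_cast hN j₀
  refine hpos.not_ge (Finset.sum_nonpos fun i _ => ?_)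
  obtain rfl | hi := eq_or_ne i j₀
  · simp [t, hc₀]
  refine mul_nonpos_of_nonneg_of_nonpos ?_ (by exact_mod_cast hoff i j₀ hi)
  by_cases hci : c i = 0
  · simp [hci]
  have hle := hmin i (by simpa using hci)
  have hc₀' : (0 : ℚ) < c j₀ := by positivity
  rw [div_le_div_iff₀ hc₀' (by positivity)] at hle
  rwa [sub_nonneg, div_mul_eq_mul_div, div_le_iff₀ hc₀']

section RootDatum

variable {S : RootDatum ℓ}

lemma two_rho_mem_posCone : (2 : ℤ) • ρ ∈ posCone S := by
  rw [← S.sum_pos_roots]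
  exact sum_mem_posCone subset_rfl

lemma eq_zero_of_mem_posCone_of_neg_mem {x : P ℓ} (hx : x ∈ posCone S) (hx' : -x ∈ posCone S) :
    x = 0 := by
  obtain ⟨c, rfl⟩ := mem_posCone_iff.1 hx
  obtain ⟨d, hd⟩ := mem_posCone_iff.1 hx'
  obtain ⟨N, hN⟩ := mem_posCone_iff.1 (two_rho_mem_posCone (S := S))
  have hcd : c + d = 0 := by
    refine eq_zero_of_sum_smul_eq_zero S.α S.cartan_offdiag N (fun j => ?_) (c + d) ?_
    · have hj := congrFun hN j
      simp only [ρ, Pi.smul_apply, smul_eq_mul, mul_one, Finset.sum_apply] at hj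
      linarith
    · simp only [Pi.add_apply, Nat.cast_add, add_smul, Finset.sum_add_distrib, ← hd,
        add_neg_cancel]
  simp [(add_eq_zero.1 hcd).1]

lemma nonneg_of_smul_mem_posCone {k : ℤ} {i : Fin ℓ} (h : k • S.α i ∈ posCone S) : 0 ≤ k := by
  by_contra! hk
  have hneg : -(k • S.α i) ∈ posCone S := by
    rw [← neg_smul, ← Int.toNat_of_nonneg (neg_nonneg.2 hk.le), natCast_zsmul]
    exact Submodule.smul_of_tower_mem _ _ (mem_posCone_of_mem_Φpos (S.simple_mem i))
  have := congrFun (eq_zero_of_mem_posCone_of_neg_mem h hneg) i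
  simp [S.cartan_diag i] at this
  omega

lemma sRefl_mem_Wgrp (i : Fin ℓ) : sRefl S i ∈ Wgrp S :=
  AddSubgroup.subset_closure ⟨i, rfl⟩

end RootDatum

section WeylAction

lemma wact_add (w v : AddAut (P ℓ)) (f : R ℓ) : wact (w + v) f = wact w (wact v f) := by
  simp only [wact, AddMonoidAlgebra.coeff_ofCoeff, ← Finsupp.mapDomain_comp]
  rfl

lemma wact_zero (f : R ℓ) : wact (0 : AddAut (P ℓ)) f = f :=
  congrArg AddMonoidAlgebra.ofCoeff (Finsupp.mapDomain_id (v := f.coeff))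

lemma coeff_wact_apply (w : AddAut (P ℓ)) (f : R ℓ) (μ : P ℓ) :
    (wact w f).coeff (w μ) = f.coeff μ :=
  Finsupp.mapDomain_apply w.injective f.coeff μ

lemma wact_eq_self_of_mem_Wgrp {S : RootDatum ℓ} {f : R ℓ}
    (hf : ∀ i, wact (sRefl S i) f = f) {w : AddAut (P ℓ)} (hw : w ∈ Wgrp S) :
    wact w f = f := by
  induction hw using AddSubgroup.closure_induction with
  | mem _ hx => obtain ⟨i, rfl⟩ := hx; exact hf i
  | zero => exact wact_zero f
  | add x y _ _ hx hy => rw [wact_add, hy, hx]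
  | neg x _ hx => conv_lhs => rw [← hx, ← wact_add, neg_add_cancel, wact_zero]

lemma CharTheory.coeff_chV_apply {S : RootDatum ℓ} (T : CharTheory S) {lam : P ℓ}
    (hlam : dominant lam) {w : AddAut (P ℓ)} (hw : w ∈ Wgrp S) (μ : P ℓ) :
    (T.chV lam).coeff (w μ) = (T.chV lam).coeff μ := by
  conv_lhs => rw [← wact_eq_self_of_mem_Wgrp (T.chV_invariant lam hlam) hw]
  exact coeff_wact_apply w _ μ

end WeylAction

section Orbits

variable {S : RootDatum ℓ}

lemma sub_apply_mem_posCone (T : CharTheory S) {μ : P ℓ} (hμ : dominant μ)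
    {w : AddAut (P ℓ)} (hw : w ∈ Wgrp S) : μ - w μ ∈ posCone S := by
  refine domle_iff_sub_mem.1 (T.chV_support_le μ hμ _ (Finsupp.mem_support_iff.2 ?_))
  rw [T.coeff_chV_apply hμ hw, T.chV_self μ hμ]
  exact one_ne_zero

namespace IsLongest

variable {w₀ : AddAut (P ℓ)}

lemma neg_apply_mem_posCone (hw₀ : IsLongest S w₀) {x : P ℓ} (hx : x ∈ posCone S) :
    -(w₀ x) ∈ posCone S := by
  obtain ⟨c, rfl⟩ := mem_posCone_iff.1 hx
  simp only [map_sum, ← Finset.sum_neg_distrib, natCast_zsmul, map_nsmul, ← smul_neg]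
  exact Submodule.sum_mem _ fun i _ =>
    Submodule.smul_of_tower_mem _ _ (mem_posCone_of_mem_Φpos (hw₀.2 _ (S.simple_mem i)))

lemma apply_rho (hw₀ : IsLongest S w₀) : w₀ ρ = -ρ := by
  classical
  let f : P ℓ ↪ P ℓ := ⟨fun β => -(w₀ β), neg_injective.comp w₀.injective⟩
  have hmap : S.Φpos.map f = S.Φpos :=
    Finset.eq_of_subset_of_card_le (fun _ hx => by
      obtain ⟨β, hβ, rfl⟩ := Finset.mem_map.1 hx; exact hw₀.2 β hβ) (Finset.card_map f).ge
  have h2 : (2 : ℤ) • w₀ ρ = (2 : ℤ) • -ρ := by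
    rw [← map_zsmul, ← S.sum_pos_roots, smul_neg, ← S.sum_pos_roots, map_sum,
      ← neg_eq_iff_eq_neg, ← Finset.sum_neg_distrib]
    conv_rhs => rw [← hmap, Finset.sum_map]
    rfl
  exact smul_right_injective (P ℓ) two_ne_zero h2

lemma apply_sub_apply_mem_posCone (hw₀ : IsLongest S w₀) (T : CharTheory S) {μ : P ℓ}
    (hμ : dominant μ) {w : AddAut (P ℓ)} (hw : w ∈ Wgrp S) : w μ - w₀ μ ∈ posCone S := by
  have h := hw₀.neg_apply_mem_posCone
    (sub_apply_mem_posCone T hμ (add_mem (neg_mem hw₀.1) hw))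
  rwa [map_sub, neg_sub, ← AddAut.add_apply, add_neg_cancel_left] at h

lemma dominant_neg_apply (hw₀ : IsLongest S w₀) (T : CharTheory S) {μ : P ℓ}
    (hμ : dominant μ) :
    dominant (-(w₀ μ)) := fun i => by
  have h := hw₀.apply_sub_apply_mem_posCone T hμ (add_mem (sRefl_mem_Wgrp i) hw₀.1)
  rw [AddAut.add_apply, show sRefl S i (w₀ μ) - w₀ μ = (-(w₀ μ)) i • S.α i by
    simp [sRefl, neg_smul]] at h
  exact nonneg_of_smul_mem_posCone h

end IsLongest

end Orbits

section WeightsOfVRho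

lemma e_add (a b : P ℓ) : e (a + b) = e a * e b := by
  simp [e, AddMonoidAlgebra.single_mul_single]

lemma e_sum {ι : Type*} (s : Finset ι) (f : ι → P ℓ) : e (∑ i ∈ s, f i) = ∏ i ∈ s, e (f i) := by
  classical
  induction s using Finset.induction_on with
  | empty => rfl
  | insert a s ha ih => rw [Finset.sum_insert ha, Finset.prod_insert ha, e_add, ih]

lemma coeff_sum_e {ι : Type*} (s : Finset ι) (f : ι → P ℓ) (μ : P ℓ) :
    (∑ i ∈ s, e (f i)).coeff μ = ({i ∈ s | f i = μ} : Finset ι).card := by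
  classical
  simp [e, AddMonoidAlgebra.coeff_sum, Finsupp.finsetSum_apply, Finsupp.single_apply]

lemma e_mul_prod_one_add_e_neg (lam : P ℓ) (Φ : Finset (P ℓ)) :
    e lam * ∏ β ∈ Φ, (1 + e (-β)) = ∑ A ∈ Φ.powerset, e (lam - ∑ β ∈ A, β) := by
  rw [Finset.prod_one_add, Finset.mul_sum]
  refine Finset.sum_congr rfl fun A _ => ?_
  rw [sub_eq_add_neg, e_add, ← Finset.sum_neg_distrib, e_sum]

lemma coeff_e_mul_prod_one_add_e_neg_ne_zero_iff (lam : P ℓ) (Φ : Finset (P ℓ)) (μ : P ℓ) :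
    (e lam * ∏ β ∈ Φ, (1 + e (-β))).coeff μ ≠ 0 ↔ ∃ A ⊆ Φ, lam - ∑ β ∈ A, β = μ := by
  rw [e_mul_prod_one_add_e_neg, coeff_sum_e]
  simp only [ne_eq, Nat.cast_eq_zero, Finset.card_eq_zero, ← Finset.nonempty_iff_ne_empty,
    Finset.filter_nonempty_iff, Finset.mem_powerset]

variable {S : RootDatum ℓ}

lemma dominant_rho : dominant (ρ : P ℓ) := fun _ => zero_le_one

lemma apply_sub_sum_add_rho_mem_posCone (T : CharTheory S)
    (hchρ : T.chV ρ = e ρ * ∏ β ∈ S.Φpos, (1 + e (-β))) {y : AddAut (P ℓ)} (hy : y ∈ Wgrp S)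
    {A : Finset (P ℓ)} (hA : A ⊆ S.Φpos) : y (ρ - ∑ β ∈ A, β) + ρ ∈ posCone S := by
  have hweight : (T.chV ρ).coeff (y (ρ - ∑ β ∈ A, β)) ≠ 0 := by
    rw [T.coeff_chV_apply dominant_rho hy, hchρ,
      coeff_e_mul_prod_one_add_e_neg_ne_zero_iff]
    exact ⟨A, hA, rfl⟩
  rw [hchρ, coeff_e_mul_prod_one_add_e_neg_ne_zero_iff] at hweight
  obtain ⟨B, hB, hyA⟩ := hweight
  rw [← hyA, sub_add_eq_add_sub, ← two_smul ℤ, ← sum_sdiff_eq_two_rho_sub hB]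
  exact sum_mem_posCone Finset.sdiff_subset

lemma neg_apply_dot_sum_le_two_rho (T : CharTheory S)
    (hchρ : T.chV ρ = e ρ * ∏ β ∈ S.Φpos, (1 + e (-β))) {w₀ : AddAut (P ℓ)}
    (hw₀ : IsLongest S w₀) {w : AddAut (P ℓ)} (hw : w ∈ Wgrp S) {A : Finset (P ℓ)}
    (hA : A ⊆ S.Φpos) :
    domle S (-(w₀ (dot w (∑ β ∈ A, β)))) ((2 : ℤ) • ρ) := by
  have hy : w₀ + w ∈ Wgrp S := add_mem hw₀.1 hw
  have h₁ :=
    apply_sub_sum_add_rho_mem_posCone T hchρ hy (Finset.sdiff_subset (s := S.Φpos) (t := A))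
  have h₂ := apply_sub_sum_add_rho_mem_posCone T hchρ hy (Finset.empty_subset S.Φpos)
  rw [Finset.sum_empty, sub_zero] at h₂
  rw [domle_iff_sub_mem]
  -- With `y = w₀ w` and `w₀ ρ = -ρ`: `2ρ - ν = (y (σ_A - ρ) + ρ) + 2 (y ρ + ρ)`, where
  -- `σ_A - ρ = ρ - σ_{Φ⁺∖A}` and `ρ` are weights of `V(ρ)`.
  convert add_mem h₁ (add_mem h₂ h₂) using 1
  have hAc : ρ - ∑ β ∈ S.Φpos \ A, β = ∑ β ∈ A, β - ρ := by
    rw [sum_sdiff_eq_two_rho_sub hA, two_smul]; abel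
  rw [hAc, dot, AddAut.add_apply, AddAut.add_apply, map_sub, map_sub, map_add, map_sub, map_add,
    hw₀.apply_rho, two_smul]
  abel

end WeightsOfVRho

section Characters

variable {S : RootDatum ℓ} {T : CharTheory S}

noncomputable def coeffHom (μ : P ℓ) : R ℓ →+ ℤ :=
  (Finsupp.applyAddHom μ).comp AddMonoidAlgebra.coeffAddEquiv.toAddMonoidHom

lemma coeffHom_apply (μ : P ℓ) (f : R ℓ) : coeffHom μ f = f.coeff μ := rfl

lemma exists_mem_coeff_ne_zero_of_sum {s : Multiset (R ℓ)} {μ : P ℓ}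
    (h : s.sum.coeff μ ≠ 0) : ∃ f ∈ s, f.coeff μ ≠ 0 := by
  by_contra! hs
  rw [← coeffHom_apply, map_multiset_sum] at h
  exact h (Multiset.sum_eq_zero fun x hx => by
    obtain ⟨f, hf, rfl⟩ := Multiset.mem_map.1 hx; exact hs f hf)

lemma IsChar.add {g₁ g₂ : R ℓ} (h₁ : IsChar T g₁) (h₂ : IsChar T g₂) : IsChar T (g₁ + g₂) := by
  obtain ⟨l₁, hl₁, rfl⟩ := h₁
  obtain ⟨l₂, hl₂, rfl⟩ := h₂
  exact ⟨l₁ ++ l₂, by simpa [or_imp, forall_and] using ⟨hl₁, hl₂⟩, by simp⟩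

lemma isChar_nsmul_chV (n : ℕ) {lam : P ℓ} (hlam : dominant lam) :
    IsChar T ((n : ℤ) • T.chV lam) :=
  ⟨List.replicate n lam, fun _ hμ => List.eq_of_mem_replicate hμ ▸ hlam, by simp⟩

lemma isChar_sum_nsmul_chV (s : Finset (P ℓ)) (m : P ℓ → ℕ) (hs : ∀ ν ∈ s, dominant ν) :
    IsChar T (∑ ν ∈ s, (m ν : ℤ) • T.chV ν) :=
  Finset.sum_induction _ (IsChar T) (fun _ _ => IsChar.add) ⟨[], by simp, rfl⟩
    fun ν hν => isChar_nsmul_chV (m ν) (hs ν hν)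

lemma IsChar.coeff_nonneg {g : R ℓ} (h : IsChar T g) (μ : P ℓ) : 0 ≤ g.coeff μ := by
  obtain ⟨l, -, rfl⟩ := h
  rw [← coeffHom_apply, map_list_sum, List.map_map]
  exact List.sum_nonneg fun _ hx => by
    obtain ⟨ν, -, rfl⟩ := List.mem_map.1 hx; exact T.chV_coeff_nonneg ν μ

lemma OccursWithMult.occurs {n : ℕ} {lam : P ℓ} {g : R ℓ} (h : OccursWithMult T n lam g)
    (hn : 0 < n) (hlam : dominant lam) : Occurs T lam g := by
  obtain ⟨h, hh, rfl⟩ := h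
  refine ⟨((n - 1 : ℕ) : ℤ) • T.chV lam + h, (isChar_nsmul_chV _ hlam).add hh, ?_⟩
  rw [← add_assoc, ← add_smul, Nat.cast_sub hn, Nat.cast_one, add_sub_cancel]

lemma Occurs.coeff_pos {lam : P ℓ} {g : R ℓ} (h : Occurs T lam g) (hlam : dominant lam) :
    0 < g.coeff lam := by
  obtain ⟨h, hh, rfl⟩ := h
  rw [AddMonoidAlgebra.coeff_add, Finsupp.add_apply, Nat.cast_one, one_smul,
    T.chV_self lam hlam]
  linarith [hh.coeff_nonneg lam]

lemma occursWithMult_of_eq_sum_add {s : Finset (P ℓ)} (m : P ℓ → ℕ) (hs : ∀ ν ∈ s, dominant ν)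
    {lam : P ℓ} (hlam : lam ∈ s) {g h : R ℓ} (hh : IsChar T h)
    (hg : g = ∑ ν ∈ s, (m ν : ℤ) • T.chV ν + h) : OccursWithMult T (m lam) lam g := by
  classical
  refine ⟨∑ ν ∈ s.erase lam, (m ν : ℤ) • T.chV ν + h,
    (isChar_sum_nsmul_chV _ m fun ν hν => hs ν (Finset.mem_of_mem_erase hν)).add hh, ?_⟩
  rw [hg, ← Finset.add_sum_erase s _ hlam, add_assoc]

end Characters

lemma le_two_rho_of_coeff_ne_zero {S : RootDatum ℓ} (T : CharTheory S)
    (hchρ : T.chV ρ = e ρ * ∏ β ∈ S.Φpos, (1 + e (-β))) {w₀ : AddAut (P ℓ)}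
    (hw₀ : IsLongest S w₀) {A : Finset (P ℓ)} (hA : A ⊆ S.Φpos) {H : R ℓ}
    (hH : H = 0 ∨ ∃ w ∈ Wgrp S, dominant (dot w (∑ β ∈ A, β)) ∧
      H = T.chV (-(w₀ (dot w (∑ β ∈ A, β)))))
    {lam : P ℓ} (hlam : H.coeff lam ≠ 0) : domle S lam ((2 : ℤ) • ρ) := by
  rcases hH with rfl | ⟨w, hw, hdom, rfl⟩
  · exact absurd rfl hlam
  · exact domle_trans
      (T.chV_support_le _ (hw₀.dominant_neg_apply T hdom) lam (Finsupp.mem_support_iff.2 hlam))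
      (neg_apply_dot_sum_le_two_rho T hchρ hw₀ hw hA)

end Development

/-- `HT` is the character of `H•(G/B, ∧•𝒯_{G/B}) ≅ HH•(G/B)`; the geometric
input consists of the Borel–Weil–Bott constraints on the cohomology of the
graded line bundles of `∧•𝒯_{G/B} = 𝓛(∧•𝔲)` (`hgrT`, `hBWB`, `hsurj`)
together with the embedding `V(ρ) ⊗ V(ρ) ↪ H•(G/B, ∧•𝒯_{G/B})` (`hembed`);
`m` with support `msupp` gives the decomposition `V(ρ) ⊗ V(ρ) = ⊕_ν V(ν)^{⊕ m ν}`
(`hm_dom`, `hm_out`, `hdecomp`); and `hKostant` is Kostant's conjecture. -/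
theorem occurs_in_hochschild_cohomology_iff_le_two_rho
    {ℓ : ℕ} (S : RootDatum ℓ) (T : CharTheory S)
    (w₀ : AddAut (P ℓ)) (hw₀ : IsLongest S w₀)
    (hchρ : T.chV ρ = e ρ * ∏ β ∈ S.Φpos, (1 + e (-β)))
    (grT : Multiset (P ℓ))
    (hgrT : grT = S.Φpos.powerset.val.map (fun A => -(∑ β ∈ A, β)))
    (Hgr : P ℓ → R ℓ)
    (hBWB : ∀ ξ ∈ grT, Hgr ξ = 0 ∨ ∃ w ∈ Wgrp S, dominant (dot w (-ξ)) ∧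
      Hgr ξ = T.chV (-(w₀ (dot w (-ξ)))))
    (HT : R ℓ)
    (hsurj : ∃ h : R ℓ, IsChar T h ∧ (grT.map Hgr).sum = HT + h)
    -- the embedding `V(ρ) ⊗ V(ρ) ↪ H•(G/B, ∧•𝒯_{G/B})`:
    (hembed : ∃ h : R ℓ, IsChar T h ∧ HT = T.chV ρ * T.chV ρ + h)
    -- the decomposition `V(ρ) ⊗ V(ρ) ≅ ⊕_ν V(ν)^{⊕ m ν}`:
    (m : P ℓ → ℕ) (msupp : Finset (P ℓ))
    (hm_dom : ∀ ν ∈ msupp, dominant ν)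
    (hm_out : ∀ ν ∉ msupp, m ν = 0)
    (hdecomp : T.chV ρ * T.chV ρ = ∑ ν ∈ msupp, (m ν : ℤ) • T.chV ν)
    -- Kostant's conjecture:
    (hKostant : ∀ lam : P ℓ, dominant lam →
      (0 < m lam ↔ domle S lam ((2 : ℤ) • ρ)))
    (lam : P ℓ) (hlam : dominant lam) :
    (Occurs T lam HT ↔ domle S lam ((2 : ℤ) • ρ)) ∧
    (domle S lam ((2 : ℤ) • ρ) →
      0 < m lam ∧ OccursWithMult T (m lam) lam HT) := by
  have hback : domle S lam ((2 : ℤ) • ρ) → 0 < m lam ∧ OccursWithMult T (m lam) lam HT := by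
    intro hle
    have hpos := (hKostant lam hlam).2 hle
    have hmem : lam ∈ msupp := by_contra fun h => hpos.ne' (hm_out lam h)
    obtain ⟨h, hh, hHT⟩ := hembed
    exact ⟨hpos, occursWithMult_of_eq_sum_add m hm_dom hmem hh (hdecomp ▸ hHT)⟩
  refine ⟨⟨fun hocc => ?_, fun hle => (hback hle).2.occurs (hback hle).1 hlam⟩, hback⟩
  obtain ⟨h, hh, hsum⟩ := hsurj
  have hcoeff : ((grT.map Hgr).sum).coeff lam ≠ 0 := by
    rw [hsum, AddMonoidAlgebra.coeff_add, Finsupp.add_apply]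
    linarith [hocc.coeff_pos hlam, hh.coeff_nonneg lam]
  obtain ⟨_, hH, hne⟩ := exists_mem_coeff_ne_zero_of_sum hcoeff
  obtain ⟨ξ, hξ, rfl⟩ := Multiset.mem_map.1 hH
  obtain ⟨A, hA, rfl⟩ := Multiset.mem_map.1 (hgrT ▸ hξ)
  refine le_two_rho_of_coeff_ne_zero T hchρ hw₀ (Finset.mem_powerset.1 hA) ?_ hne
  simpa only [neg_neg] using hBWB _ hξ

end KostantHH
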